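/- Let S = (P, L) be a generalized quadrangle of order (2,2) and let (R, ψ) be a faithful representation of S. Then |R| = 2^4 if and only if r_a r_b r_c = 1 for every complete 3-arc {a,b,c} of S. -/

import Mathlib

open scoped Classical

/-- A slim partial linear space: a nonempty point set, a nonempty collection of
lines each of which is a 3-element set of points, such that any two distinct
points lie in at most one common line. -/
structure SlimPLS (P : Type*) where
  lines : Set (Finset P)
  nonempty_pts : Nonempty P
  nonempty_lines : lines.Nonempty
  three_points : ∀ l ∈ lines, l.card = 3
  unique_line : ∀ l₁ ∈ lines, ∀ l₂ ∈ lines, ∀ x y : P,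
    x ≠ y → x ∈ l₁ → y ∈ l₁ → x ∈ l₂ → y ∈ l₂ → l₁ = l₂

namespace SlimPLS

variable {P : Type*}

/-- Two points are collinear if they are distinct and lie on a common line. -/
def Collinear (S : SlimPLS P) (x y : P) : Prop :=
  x ≠ y ∧ ∃ l ∈ S.lines, x ∈ l ∧ y ∈ l

/-- The collinearity graph of a slim partial linear space. -/
def graph (S : SlimPLS P) : SimpleGraph P where
  Adj x y := S.Collinear x y
  symm := ⟨fun x y h => ⟨Ne.symm h.1, h.2.elim fun l hl => ⟨l, hl.1, hl.2.2, hl.2.1⟩⟩⟩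
  loopless := ⟨fun x h => h.1 rfl⟩

/-- `S` is a generalized quadrangle of order `(2, t)`: it is connected, no point
is collinear with all other points, every point is on exactly `t+1` lines, and
for every point `x` and line `l` with `x ∉ l` there is exactly one point of `l`
collinear with `x`. -/
def IsGQ (S : SlimPLS P) (t : ℕ) : Prop :=
  S.graph.Connected ∧
  (∀ x : P, ∃ y : P, y ≠ x ∧ ¬ S.Collinear x y) ∧
  (∀ x : P, {l | l ∈ S.lines ∧ x ∈ l}.ncard = t + 1) ∧
  (∀ x : P, ∀ l ∈ S.lines, x ∉ l → ∃! y : P, y ∈ l ∧ S.Collinear x y)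

/-- A set of points is an arc if its points are pairwise non-collinear. -/
def IsArc (S : SlimPLS P) (T : Set P) : Prop :=
  ∀ x ∈ T, ∀ y ∈ T, x ≠ y → ¬ S.Collinear x y

/-- `{a,b,c}` is a complete 3-arc: three pairwise distinct, pairwise
non-collinear points not contained in a 4-arc. -/
def Complete3Arc (S : SlimPLS P) (a b c : P) : Prop :=
  a ≠ b ∧ a ≠ c ∧ b ≠ c ∧ S.IsArc {a, b, c} ∧
  ∀ d : P, d ∉ ({a, b, c} : Set P) → ¬ S.IsArc (insert d {a, b, c})

/-- `{a,b,c}` is a complete 3-arc of the subset `Q`: three pairwise distinct,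
pairwise non-collinear points of `Q` not contained in a 4-arc inside `Q`. -/
def Complete3ArcIn (S : SlimPLS P) (Q : Set P) (a b c : P) : Prop :=
  a ∈ Q ∧ b ∈ Q ∧ c ∈ Q ∧ a ≠ b ∧ a ≠ c ∧ b ≠ c ∧ S.IsArc {a, b, c} ∧
  ∀ d ∈ Q, d ∉ ({a, b, c} : Set P) → ¬ S.IsArc (insert d {a, b, c})

/-- `Q` is a sub-generalized-quadrangle of order `(2,t)` of `S`: together with
the lines of `S` contained in it, `Q` is a `(2,t)`-GQ; in particular any line
meeting `Q` in at least two points is contained in `Q`. -/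
def IsSubGQ (S : SlimPLS P) (Q : Set P) (t : ℕ) : Prop :=
  Q.Nonempty ∧
  (∃ l ∈ S.lines, (l : Set P) ⊆ Q) ∧
  (∀ l ∈ S.lines, ∀ x ∈ l, ∀ y ∈ l, x ≠ y → x ∈ Q → y ∈ Q → (l : Set P) ⊆ Q) ∧
  (SimpleGraph.induce Q S.graph).Connected ∧
  (∀ x ∈ Q, ∃ y ∈ Q, y ≠ x ∧ ¬ S.Collinear x y) ∧
  (∀ x ∈ Q, {l | l ∈ S.lines ∧ x ∈ l ∧ (l : Set P) ⊆ Q}.ncard = t + 1) ∧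
  (∀ x ∈ Q, ∀ l ∈ S.lines, (l : Set P) ⊆ Q → x ∉ l → ∃! y : P, y ∈ l ∧ S.Collinear x y)

/-- `S` is a near hexagon: connected of diameter 3, no point collinear with all
other points, and for every point `x` and line `l` there is a unique point of
`l` nearest to `x`. -/
def IsNearHexagon (S : SlimPLS P) : Prop :=
  S.graph.Connected ∧
  (∀ x y : P, S.graph.dist x y ≤ 3) ∧
  (∃ x y : P, S.graph.dist x y = 3) ∧
  (∀ x : P, ∃ y : P, y ≠ x ∧ ¬ S.Collinear x y) ∧
  (∀ x : P, ∀ l ∈ S.lines, ∃! y : P, y ∈ l ∧ ∀ z ∈ l, S.graph.dist x y ≤ S.graph.dist x z)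

/-- `S` is dense: any two points at distance 2 have at least two common
neighbours. -/
def IsDense (S : SlimPLS P) : Prop :=
  ∀ x y : P, S.graph.dist x y = 2 →
    ∃ u v : P, u ≠ v ∧ S.Collinear x u ∧ S.Collinear u y ∧ S.Collinear x v ∧ S.Collinear v y

/-- `Q` is a quad: a convex subset of diameter 2 in which no point is collinear
with all other points of `Q`. -/
def IsQuad (S : SlimPLS P) (Q : Set P) : Prop :=
  (∀ u ∈ Q, ∀ v ∈ Q, ∀ w : P,
      S.graph.dist u w + S.graph.dist w v = S.graph.dist u v → w ∈ Q) ∧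
  (∀ u ∈ Q, ∀ v ∈ Q, S.graph.dist u v ≤ 2) ∧
  (∃ u ∈ Q, ∃ v ∈ Q, S.graph.dist u v = 2) ∧
  (∀ u ∈ Q, ∃ v ∈ Q, v ≠ u ∧ ¬ S.Collinear u v)

/-- A quad `Q` is of type `(2, t₂)` if every point of `Q` lies on exactly
`t₂ + 1` lines contained in `Q`. -/
def QuadType (S : SlimPLS P) (Q : Set P) (t₂ : ℕ) : Prop :=
  ∀ x ∈ Q, {l | l ∈ S.lines ∧ x ∈ l ∧ (l : Set P) ⊆ Q}.ncard = t₂ + 1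

/-- The point-quad pair `(x, Q)` is classical: there is a unique point `y ∈ Q`
nearest to `x`, with `d(x,z) = d(x,y) + d(y,z)` for all `z ∈ Q`. -/
def IsClassicalPair (S : SlimPLS P) (x : P) (Q : Set P) : Prop :=
  ∃! y : P, y ∈ Q ∧ ∀ z ∈ Q, S.graph.dist x z = S.graph.dist x y + S.graph.dist y z

/-- A quad is classical (big) if every point-quad pair with it is classical. -/
def IsClassicalQuad (S : SlimPLS P) (Q : Set P) : Prop :=
  ∀ x : P, S.IsClassicalPair x Q

/-- A subspace: any line containing two of its points is contained in it. -/
def IsSubspace (S : SlimPLS P) (X : Set P) : Prop :=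
  ∀ l ∈ S.lines, ∀ x ∈ l, ∀ y ∈ l, x ≠ y → x ∈ X → y ∈ X → (l : Set P) ⊆ X

/-- The subspace generated by a set of points. -/
def subspaceGen (S : SlimPLS P) (A : Set P) : Set P :=
  ⋂₀ {X | S.IsSubspace X ∧ A ⊆ X}

/-- `NPdim S` is the rank over `F₂` of the distance-3 adjacency matrix. -/
noncomputable def NPdim [Fintype P] (S : SlimPLS P) : ℕ :=
  Matrix.rank (Matrix.of fun x y : P => if S.graph.dist x y = 3 then (1 : ZMod 2) else 0)

/-- `dimV S` is the dimension of the universal representation module of `S`: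
the free `F₂`-vector space on the points modulo the span of the elements
`v_x + v_y + v_z` for the lines `{x,y,z}`. -/
noncomputable def dimV (S : SlimPLS P) : ℕ :=
  Module.finrank (ZMod 2)
    ((P →₀ ZMod 2) ⧸ Submodule.span (ZMod 2)
      {f : P →₀ ZMod 2 | ∃ l ∈ S.lines, f = ∑ x ∈ l, Finsupp.single x 1})

end SlimPLS

/-- A representation of a slim partial linear space `S`: an assignment of an
order-2 element `r x` of `R` to each point `x`, such that the images generate
`R` and for every line `{x,y,z}` the set `{1, r x, r y, r z}` is a Klein four
subgroup (`r x * r y = r z` for the three pairwise distinct points of a line). -/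
structure SlimPLS.Rep {P : Type*} (S : SlimPLS P) (R : Type*) [Group R] where
  r : P → R
  order_two : ∀ x : P, orderOf (r x) = 2
  gen : Subgroup.closure (Set.range r) = ⊤
  line_rel : ∀ l ∈ S.lines, ∀ x ∈ l, ∀ y ∈ l, ∀ z ∈ l,
    x ≠ y → x ≠ z → y ≠ z → r x * r y = r z

/-- A finite 2-group is extraspecial if its Frattini subgroup, commutator
subgroup and center coincide and have order 2. -/
def IsExtraspecial (G : Type*) [Group G] : Prop :=
  Finite G ∧ IsPGroup 2 G ∧ frattini G = commutator G ∧
    commutator G = Subgroup.center G ∧ Nat.card (Subgroup.center G) = 2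

/-!
Counting along a line, each of its three points has `2t` neighbours off it, so a `(2,t)`-GQ has
`3(2t+1)` points, 15 for `t = 2`. For non-collinear `a, b` of a `(2,2)`-GQ the three points of
`{a, b}^⊥` are pairwise non-collinear, and regularity of the pair gives a point `c ∉ {a, b}`
collinear with all of them; such a `c` makes `{a, b, c}` a complete 3-arc, and it is the only
third point of a complete 3-arc through `a` and `b`.

If the relations hold, `{1} ∪ {r_x}` is closed under products (`r_x r_y` is `r_{x*y}` for
collinear `x, y`, and `r_c` for the complete 3-arc `{x, y, c}` otherwise), so it is all of `R` and
`|R| = 16`. Conversely, if `|R| = 16` every non-trivial element is some `r_x`, so `R` is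
elementary abelian; the point `d` with `r_d = r_a r_b` is then collinear with all of `{a, b}^⊥`,
hence it is the third point of the complete 3-arc through `a` and `b`.
-/

namespace SlimPLS

variable {P : Type*} {S : SlimPLS P} {t : ℕ} {a b c d p w x y z z₁ z₂ z₃ : P} {l : Finset P}

theorem Collinear.ne (h : S.Collinear x y) : x ≠ y := h.1

theorem Collinear.symm (h : S.Collinear x y) : S.Collinear y x :=
  S.graph.adj_symm h

theorem collinear_comm : S.Collinear x y ↔ S.Collinear y x :=
  ⟨Collinear.symm, Collinear.symm⟩

theorem collinear_of_mem (hl : l ∈ S.lines) (hx : x ∈ l) (hy : y ∈ l) (hxy : x ≠ y) :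
    S.Collinear x y :=
  ⟨hxy, l, hl, hx, hy⟩

theorem exists_third (h : S.Collinear x y) :
    ∃ z, z ≠ x ∧ z ≠ y ∧ ∃ l ∈ S.lines, x ∈ l ∧ y ∈ l ∧ z ∈ l := by
  obtain ⟨hxy, l, hl, hx, hy⟩ := h
  obtain ⟨z, hz, hzxy⟩ := Finset.exists_mem_notMem_of_card_lt_card
    (s := {x, y}) (t := l) (by rw [S.three_points l hl, Finset.card_pair hxy]; norm_num)
  simp only [Finset.mem_insert, Finset.mem_singleton, not_or] at hzxy
  exact ⟨z, hzxy.1, hzxy.2, l, hl, hx, hy, hz⟩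

/-- The point `x * y`: the third point of the line through collinear `x` and `y` (a junk value
if they are not collinear). -/
noncomputable def third (S : SlimPLS P) (x y : P) : P :=
  if h : ∃ z, z ≠ x ∧ z ≠ y ∧ ∃ l ∈ S.lines, x ∈ l ∧ y ∈ l ∧ z ∈ l then h.choose else x

noncomputable def line (S : SlimPLS P) (x y : P) : Finset P := {x, y, S.third x y}

theorem third_spec (h : S.Collinear x y) :
    S.third x y ≠ x ∧ S.third x y ≠ y ∧ ∃ l ∈ S.lines, x ∈ l ∧ y ∈ l ∧ S.third x y ∈ l := by
  have hex := exists_third h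
  rw [third, dif_pos hex]
  exact hex.choose_spec

theorem eq_line (hl : l ∈ S.lines) (hx : x ∈ l) (hy : y ∈ l) (hxy : x ≠ y) : l = S.line x y := by
  obtain ⟨h3x, h3y, l', hl', hx', hy', h3⟩ := third_spec (collinear_of_mem hl hx hy hxy)
  obtain rfl := S.unique_line l hl l' hl' x y hxy hx hy hx' hy'
  symm
  refine Finset.eq_of_subset_of_card_le (by simp [line, Finset.insert_subset_iff, *]) ?_
  rw [S.three_points l hl, line, Finset.card_insert_of_notMem (by simp [hxy, h3x.symm]),
    Finset.card_pair h3y.symm]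

theorem line_mem (h : S.Collinear x y) : S.line x y ∈ S.lines := by
  obtain ⟨-, -, l, hl, hx, hy, -⟩ := third_spec h
  exact eq_line hl hx hy h.ne ▸ hl

theorem mem_line : z ∈ S.line x y ↔ z = x ∨ z = y ∨ z = S.third x y := by
  simp [line]

theorem third_ne_left (h : S.Collinear x y) : S.third x y ≠ x := (third_spec h).1

theorem third_ne_right (h : S.Collinear x y) : S.third x y ≠ y := (third_spec h).2.1

theorem collinear_third_left (h : S.Collinear x y) : S.Collinear x (S.third x y) :=
  collinear_of_mem (line_mem h) (by simp [line]) (by simp [line]) (third_ne_left h).symm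

theorem collinear_third_right (h : S.Collinear x y) : S.Collinear y (S.third x y) :=
  collinear_of_mem (line_mem h) (by simp [line]) (by simp [line]) (third_ne_right h).symm

theorem eq_third (hl : l ∈ S.lines) (hx : x ∈ l) (hy : y ∈ l) (hz : z ∈ l) (hxy : x ≠ y)
    (hzx : z ≠ x) (hzy : z ≠ y) : z = S.third x y := by
  rw [eq_line hl hx hy hxy, mem_line] at hz
  tauto

theorem third_comm (h : S.Collinear x y) : S.third x y = S.third y x :=
  eq_third (line_mem h) (by simp [line]) (by simp [line]) (by simp [line]) h.ne.symm
    (third_ne_right h) (third_ne_left h)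

theorem third_third (h : S.Collinear x y) : S.third x (S.third x y) = y :=
  (eq_third (line_mem h) (by simp [line]) (by simp [line]) (by simp [line])
    (third_ne_left h).symm h.ne.symm (third_ne_right h).symm).symm

theorem mem_commonNeighbors :
    z ∈ S.graph.commonNeighbors a b ↔ S.Collinear a z ∧ S.Collinear b z :=
  Iff.rfl

theorem mem_neighborSet : y ∈ S.graph.neighborSet x ↔ S.Collinear x y :=
  Iff.rfl

theorem IsGQ.existsUnique_collinear (hGQ : S.IsGQ t) (hl : l ∈ S.lines) (hx : x ∉ l) :
    ∃! y, y ∈ l ∧ S.Collinear x y :=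
  hGQ.2.2.2 x l hl hx

theorem IsGQ.eq_third_of_collinear (hGQ : S.IsGQ t) (hxy : S.Collinear x y)
    (hxz : S.Collinear x z) (hyz : S.Collinear y z) : z = S.third x y := by
  by_cases hz : z ∈ S.line x y
  · rw [mem_line] at hz
    rcases hz with rfl | rfl | h
    · exact absurd rfl hxz.ne
    · exact absurd rfl hyz.ne
    · exact h
  · exact absurd ((hGQ.existsUnique_collinear (line_mem hxy) hz).unique
      ⟨by simp [line], hxz.symm⟩ ⟨by simp [line], hyz.symm⟩) hxy.ne

theorem IsGQ.collinear_third_of_not_collinear (hGQ : S.IsGQ t) (hxy : S.Collinear x y)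
    (hpx : ¬ S.Collinear p x) (hpy : ¬ S.Collinear p y) : S.Collinear p (S.third x y) := by
  have hp : p ∉ S.line x y := by
    rw [mem_line]
    rintro (rfl | rfl | rfl)
    · exact hpy hxy
    · exact hpx hxy.symm
    · exact hpx (collinear_third_left hxy).symm
  obtain ⟨q, ⟨hq, hpq⟩, -⟩ := hGQ.existsUnique_collinear (line_mem hxy) hp
  rw [mem_line] at hq
  rcases hq with rfl | rfl | rfl
  · exact absurd hpq hpx
  · exact absurd hpq hpy
  · exact hpq

theorem IsGQ.not_collinear_third (hGQ : S.IsGQ t) (hxy : S.Collinear x y)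
    (hpx : S.Collinear p x) (hne : p ≠ y) :
    ¬ S.Collinear p (S.third x y) := fun h =>
  hne (by rw [hGQ.eq_third_of_collinear (collinear_third_left hxy) hpx.symm h.symm,
    third_third hxy])

theorem IsGQ.not_collinear_of_mem_commonNeighbors (hGQ : S.IsGQ t) (hne : a ≠ b)
    (hz : z ∈ S.graph.commonNeighbors a b) (hw : w ∈ S.graph.commonNeighbors a b) :
    ¬ S.Collinear z w := by
  rw [mem_commonNeighbors] at hz hw
  intro h
  exact hGQ.not_collinear_third hz.1.symm hz.2 hne.symm
    (hGQ.eq_third_of_collinear hz.1.symm h hw.1 ▸ hw.2)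

theorem IsGQ.ncard_commonNeighbors (hGQ : S.IsGQ t) (hab : ¬ S.Collinear a b) (hne : a ≠ b) :
    (S.graph.commonNeighbors a b).ncard = t + 1 := by
  rw [← hGQ.2.2.1 b]
  refine Set.ncard_congr (fun z _ => S.line b z)
    (fun z hz => ⟨line_mem hz.2, by simp [line]⟩) (fun z w hz hw hzw => ?_) ?_
  · rw [mem_commonNeighbors] at hz hw
    have ha : a ∉ S.line b z := by
      rw [mem_line]
      rintro (rfl | rfl | h)
      · exact hne rfl
      · exact hz.1.ne rfl
      · exact hab (h ▸ collinear_third_left hz.2).symm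
    have hw' : w ∈ S.line b z := hzw ▸ by simp [line]
    exact (hGQ.existsUnique_collinear (line_mem hz.2) ha).unique ⟨by simp [line], hz.1⟩
      ⟨hw', hw.1⟩
  · rintro l ⟨hl, hbl⟩
    have ha : a ∉ l := fun h => hab (collinear_of_mem hl h hbl hne)
    obtain ⟨z, ⟨hz, haz⟩, -⟩ := hGQ.existsUnique_collinear hl ha
    have hzb : b ≠ z := fun h => hab (h ▸ haz)
    exact ⟨z, ⟨haz, collinear_of_mem hl hbl hz hzb⟩, (eq_line hl hbl hz hzb).symm⟩

theorem IsGQ.exists_eq_or_collinear_of_ncard_eq (hGQ : S.IsGQ t) {A : Set P} (hA : S.IsArc A)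
    (hxA : ∀ g ∈ A, S.Collinear x g) (hcard : A.ncard = t + 1) (hd : S.Collinear x d) :
    ∃ g ∈ A, d = g ∨ S.Collinear g d := by
  have hinj : Set.InjOn (S.line x) A := by
    intro g hg g' hg' h
    by_contra hne
    have hg'l : g' ∈ S.line x g := h ▸ by simp [line]
    rw [mem_line] at hg'l
    rcases hg'l with h' | h' | h'
    · exact (hxA g' hg').ne h'.symm
    · exact hne h'.symm
    · exact hA g hg g' hg' hne (by rw [h']; exact collinear_third_right (hxA g hg))
  have hsub : S.line x '' A ⊆ {l | l ∈ S.lines ∧ x ∈ l} := by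
    rintro _ ⟨g, hg, rfl⟩
    exact ⟨line_mem (hxA g hg), by simp [line]⟩
  have hL := hGQ.2.2.1 x
  have heq := Set.eq_of_subset_of_ncard_le hsub (by rw [hL, hinj.ncard_image, hcard])
    (Set.finite_of_ncard_ne_zero (by omega))
  obtain ⟨g, hg, hgd⟩ : S.line x d ∈ S.line x '' A := heq ▸ ⟨line_mem hd, by simp [line]⟩
  have hdg : d ∈ S.line x g := hgd ▸ by simp [line]
  rw [mem_line] at hdg
  rcases hdg with h | h | h
  · exact absurd h.symm hd.ne
  · exact ⟨g, hg, Or.inl h⟩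
  · exact ⟨g, hg, Or.inr (by rw [h]; exact collinear_third_right (hxA g hg))⟩

theorem IsGQ.card_eq (hGQ : S.IsGQ t) : Nat.card P = 3 * (2 * t + 1) := by
  obtain ⟨l, hl⟩ := S.nonempty_lines
  have hfin : ∀ x, {m | m ∈ S.lines ∧ x ∈ m}.Finite := fun x =>
    Set.finite_of_ncard_ne_zero (by rw [hGQ.2.2.1 x]; omega)
  -- the neighbours of `x ∈ l` off `l`; each point off `l` is one of them for exactly one `x`
  let off : P → Finset P := fun x => ((hfin x).toFinset.erase l).biUnion (·.erase x)
  have mem_off : ∀ x ∈ l, ∀ p ∈ off x, p ∉ l ∧ S.Collinear x p := by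
    intro x hx p hp
    simp only [off, Finset.mem_biUnion, Finset.mem_erase, Set.Finite.mem_toFinset] at hp
    obtain ⟨m, ⟨hml, hm, hxm⟩, hpx, hpm⟩ := hp
    exact ⟨fun hpl => hml (S.unique_line m hm l hl p x hpx hpm hxm hpl hx),
      collinear_of_mem hm hxm hpm (Ne.symm hpx)⟩
  have card_off : ∀ x ∈ l, (off x).card = t * 2 := by
    intro x hx
    rw [Finset.card_biUnion]
    · rw [Finset.sum_congr rfl fun m hm => by
          simp only [Finset.mem_erase, Set.Finite.mem_toFinset] at hm
          rw [Finset.card_erase_of_mem hm.2.2, S.three_points m hm.2.1],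
        Finset.sum_const, smul_eq_mul, Finset.card_erase_of_mem (by simp [hl, hx]),
        ← Set.ncard_eq_toFinset_card _ (hfin x), hGQ.2.2.1 x]
      rfl
    · intro m hm m' hm' hmm'
      simp only [Finset.coe_erase, Set.Finite.coe_toFinset, Set.mem_sdiff,
        Set.mem_ofPred_eq] at hm hm'
      refine Finset.disjoint_left.mpr fun q hq hq' => ?_
      rw [Finset.mem_erase] at hq hq'
      exact hmm' (S.unique_line m hm.1.1 m' hm'.1.1 q x hq.1 hq.2 hm.1.2 hq'.2 hm'.1.2)
  have hdisj : Disjoint l (l.biUnion off) := by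
    refine Finset.disjoint_left.mpr fun q hql hq => ?_
    obtain ⟨x, hx, hqx⟩ := Finset.mem_biUnion.mp hq
    exact (mem_off x hx q hqx).1 hql
  have hpd : (l : Set P).PairwiseDisjoint off := by
    intro x hx x' hx' hxx'
    refine Finset.disjoint_left.mpr fun q hq hq' => hxx' ?_
    obtain ⟨hql, hqx⟩ := mem_off x hx q hq
    exact (hGQ.existsUnique_collinear hl hql).unique ⟨hx, hqx.symm⟩
      ⟨hx', (mem_off x' hx' q hq').2.symm⟩
  have hcover : ((l ∪ l.biUnion off : Finset P) : Set P) = Set.univ := by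
    refine Set.eq_univ_of_forall fun p => Finset.mem_coe.mpr (Finset.mem_union.mpr ?_)
    by_cases hpl : p ∈ l
    · exact Or.inl hpl
    obtain ⟨x, ⟨hx, hpx⟩, -⟩ := hGQ.existsUnique_collinear hl hpl
    refine Or.inr (Finset.mem_biUnion.mpr ⟨x, hx, ?_⟩)
    refine Finset.mem_biUnion.mpr ⟨S.line x p, ?_, ?_⟩
    · simp only [Finset.mem_erase, Set.Finite.mem_toFinset, Set.mem_ofPred_eq]
      exact ⟨fun h => hpl (h ▸ by simp [line]), line_mem hpx.symm, by simp [line]⟩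
    · exact Finset.mem_erase.mpr ⟨hpx.ne, by simp [line]⟩
  rw [← Set.ncard_univ, ← hcover, Set.ncard_coe_finset, Finset.card_union_of_disjoint hdisj,
    Finset.card_biUnion hpd, Finset.sum_congr rfl card_off, Finset.sum_const, smul_eq_mul,
    S.three_points l hl]
  ring

theorem isArc_insert {A : Set P} :
    S.IsArc (insert x A) ↔ S.IsArc A ∧ ∀ y ∈ A, ¬ S.Collinear x y := by
  refine ⟨fun h => ⟨fun u hu v hv => h u (Or.inr hu) v (Or.inr hv),
    fun y hy hxy => h x (Or.inl rfl) y (Or.inr hy) hxy.ne hxy⟩, ?_⟩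
  rintro ⟨hA, hx⟩ u (rfl | hu) v (rfl | hv) huv
  · exact absurd rfl huv
  · exact hx v hv
  · exact fun h => hx u hu h.symm
  · exact hA u hu v hv huv

theorem isArc_triple :
    S.IsArc {a, b, c} ↔ ¬ S.Collinear a b ∧ ¬ S.Collinear a c ∧ ¬ S.Collinear b c := by
  have hc : S.IsArc {c} := fun u hu v hv huv => absurd (hu.trans hv.symm) huv
  simp only [isArc_insert, Set.mem_insert_iff, Set.mem_singleton_iff, forall_eq_or_imp,
    forall_eq]
  tauto

theorem Complete3Arc.collinear (h : S.Complete3Arc a b c) (hd : d ∉ ({a, b, c} : Set P))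
    (had : ¬ S.Collinear a d) (hbd : ¬ S.Collinear b d) : S.Collinear c d := by
  by_contra hcd
  refine h.2.2.2.2 d hd (isArc_insert.mpr ⟨h.2.2.2.1, ?_⟩)
  simp only [Set.mem_insert_iff, Set.mem_singleton_iff]
  rintro y (rfl | rfl | rfl) <;> rw [collinear_comm] <;> assumption

/-- Pairs of non-collinear points of a `(2,2)`-GQ are regular. -/
theorem IsGQ.collinear_third_commonNeighbor (hGQ : S.IsGQ 2) (hab : a ≠ b)
    (hnab : ¬ S.Collinear a b) (hz₁ : z₁ ∈ S.graph.commonNeighbors a b)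
    (hz₂ : z₂ ∈ S.graph.commonNeighbors a b) (hz₃ : z₃ ∈ S.graph.commonNeighbors a b)
    (h₁₂ : z₁ ≠ z₂) (h₁₃ : z₁ ≠ z₃) (h₂₃ : z₂ ≠ z₃) (hc : c ∈ S.graph.commonNeighbors z₁ z₂) :
    S.Collinear c z₃ := by
  rw [mem_commonNeighbors] at hz₁ hz₂ hz₃ hc
  have hca : ¬ S.Collinear c a := fun h => hGQ.not_collinear_of_mem_commonNeighbors h₁₂
    ⟨hz₁.1.symm, hz₂.1.symm⟩ hc h.symm
  have hcb : ¬ S.Collinear c b := fun h => hGQ.not_collinear_of_mem_commonNeighbors h₁₂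
    ⟨hz₁.2.symm, hz₂.2.symm⟩ hc h.symm
  have n₁₃ := hGQ.not_collinear_of_mem_commonNeighbors hab hz₁ hz₃
  have n₂₃ := hGQ.not_collinear_of_mem_commonNeighbors hab hz₂ hz₃
  by_contra hcz
  -- then the neighbour `b * z₃` of `c` lies on one of the lines joining `c` to the 3-arc
  -- `{z₁, z₂, a * z₃}`
  have hA : S.IsArc {z₁, z₂, S.third a z₃} := isArc_triple.mpr
    ⟨hGQ.not_collinear_of_mem_commonNeighbors hab hz₁ hz₂,
      hGQ.not_collinear_third hz₃.1 hz₁.1.symm h₁₃,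
      hGQ.not_collinear_third hz₃.1 hz₂.1.symm h₂₃⟩
  have hne₁ : z₁ ≠ S.third a z₃ := fun h => n₁₃ (h ▸ (collinear_third_right hz₃.1).symm)
  have hne₂ : z₂ ≠ S.third a z₃ := fun h => n₂₃ (h ▸ (collinear_third_right hz₃.1).symm)
  obtain ⟨g, hg, hgb⟩ := hGQ.exists_eq_or_collinear_of_ncard_eq hA
    (by simp only [Set.mem_insert_iff, Set.mem_singleton_iff]
        rintro g (rfl | rfl | rfl)
        exacts [hc.1.symm, hc.2.symm, hGQ.collinear_third_of_not_collinear hz₃.1 hca hcz])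
    (Set.ncard_eq_three.mpr ⟨_, _, _, h₁₂, hne₁, hne₂, rfl⟩)
    (hGQ.collinear_third_of_not_collinear hz₃.2 hcb hcz)
  simp only [Set.mem_insert_iff, Set.mem_singleton_iff] at hg
  rcases hg with rfl | rfl | rfl
  · rcases hgb with h | h
    · exact n₁₃ (h ▸ (collinear_third_right hz₃.2).symm)
    · exact hGQ.not_collinear_third hz₃.2 hz₁.2.symm h₁₃ h
  · rcases hgb with h | h
    · exact n₂₃ (h ▸ (collinear_third_right hz₃.2).symm)
    · exact hGQ.not_collinear_third hz₃.2 hz₂.2.symm h₂₃ h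
  · rw [third_comm hz₃.1] at hgb
    rcases hgb with h | h
    · exact hGQ.not_collinear_third hz₃.1.symm hz₃.2 hab.symm (h ▸ collinear_third_left hz₃.2)
    · exact hGQ.not_collinear_third hz₃.1.symm (collinear_third_right hz₃.2).symm
        (fun h' => hnab (h' ▸ collinear_third_left hz₃.2).symm) h.symm

theorem IsGQ.complete3Arc_of_subset_neighborSet (hGQ : S.IsGQ 2) (hab : a ≠ b) (hac : a ≠ c)
    (hbc : b ≠ c) (hArc : S.IsArc {a, b, c})
    (hsub : S.graph.commonNeighbors a b ⊆ S.graph.neighborSet c) : S.Complete3Arc a b c := by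
  obtain ⟨nab, nac, nbc⟩ := isArc_triple.mp hArc
  have hcard := hGQ.ncard_commonNeighbors nab hab
  have eq_ac : S.graph.commonNeighbors a b = S.graph.commonNeighbors a c := by
    have hcard' := hGQ.ncard_commonNeighbors nac hac
    exact Set.eq_of_subset_of_ncard_le (fun z hz => ⟨hz.1, hsub hz⟩) (by omega)
      (Set.finite_of_ncard_ne_zero (by omega))
  have eq_bc : S.graph.commonNeighbors a b = S.graph.commonNeighbors b c := by
    have hcard' := hGQ.ncard_commonNeighbors nbc hbc
    exact Set.eq_of_subset_of_ncard_le (fun z hz => ⟨hz.2, hsub hz⟩) (by omega)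
      (Set.finite_of_ncard_ne_zero (by omega))
  refine ⟨hab, hac, hbc, hArc, fun d hd hArcd => ?_⟩
  obtain ⟨-, hd'⟩ := isArc_insert.mp hArcd
  simp only [Set.mem_insert_iff, Set.mem_singleton_iff, forall_eq_or_imp, forall_eq,
    not_or] at hd hd'
  -- the three lines through a point of `{a, b}^⊥` pass through `a`, `b` and `c`
  have key : ∀ w ∈ S.graph.commonNeighbors a b, ¬ S.Collinear w d := by
    intro w hw hwd
    have hwA : ∀ g ∈ ({a, b, c} : Set P), S.Collinear w g := by
      simp only [Set.mem_insert_iff, Set.mem_singleton_iff]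
      rintro g (rfl | rfl | rfl)
      exacts [(mem_commonNeighbors.mp hw).1.symm, (mem_commonNeighbors.mp hw).2.symm,
        (mem_neighborSet.mp (hsub hw)).symm]
    obtain ⟨g, hg, hgd⟩ := hGQ.exists_eq_or_collinear_of_ncard_eq hArc hwA
      (Set.ncard_eq_three.mpr ⟨a, b, c, hab, hac, hbc, rfl⟩) hwd
    simp only [Set.mem_insert_iff, Set.mem_singleton_iff] at hg
    rcases hg with rfl | rfl | rfl <;> rcases hgd with h | h <;>
      simp_all [collinear_comm (x := g)]
  have hcard_ad := hGQ.ncard_commonNeighbors (fun h => hd'.1 h.symm) (Ne.symm hd.1)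
  obtain ⟨p, hp⟩ := Set.nonempty_of_ncard_ne_zero (s := S.graph.commonNeighbors a d)
    (by rw [hcard_ad]; norm_num)
  rw [mem_commonNeighbors] at hp
  by_cases hbp : S.Collinear b p
  · exact key p ⟨hp.1, hbp⟩ hp.2.symm
  by_cases hcp : S.Collinear c p
  · exact key p (by rw [eq_ac]; exact ⟨hp.1, hcp⟩) hp.2.symm
  · refine key (S.third d p) ?_ (collinear_third_left hp.2).symm
    rw [eq_bc]
    exact ⟨hGQ.collinear_third_of_not_collinear hp.2 (fun h => hd'.2.1 h.symm) hbp,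
      hGQ.collinear_third_of_not_collinear hp.2 (fun h => hd'.2.2 h.symm) hcp⟩

theorem IsGQ.exists_complete3Arc (hGQ : S.IsGQ 2) (hab : a ≠ b) (hnab : ¬ S.Collinear a b) :
    ∃ c, S.Complete3Arc a b c := by
  obtain ⟨z₁, z₂, z₃, h₁₂, h₁₃, h₂₃, hZ⟩ :=
    Set.ncard_eq_three.mp (hGQ.ncard_commonNeighbors hnab hab)
  have hz₁ : z₁ ∈ S.graph.commonNeighbors a b := by simp [hZ]
  have hz₂ : z₂ ∈ S.graph.commonNeighbors a b := by simp [hZ]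
  have hz₃ : z₃ ∈ S.graph.commonNeighbors a b := by simp [hZ]
  rw [mem_commonNeighbors] at hz₁ hz₂ hz₃
  have ha : a ∈ S.graph.commonNeighbors z₁ z₂ := ⟨hz₁.1.symm, hz₂.1.symm⟩
  have hb : b ∈ S.graph.commonNeighbors z₁ z₂ := ⟨hz₁.2.symm, hz₂.2.symm⟩
  obtain ⟨c, hc, hca, hcb⟩ : ∃ c ∈ S.graph.commonNeighbors z₁ z₂, c ≠ a ∧ c ≠ b := by
    by_contra! h
    have hle := Set.ncard_le_ncard (t := {a, b}) fun c hc => by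
      by_cases hca : c = a
      · exact Or.inl hca
      · exact Or.inr (h c hc hca)
    rw [hGQ.ncard_commonNeighbors (hGQ.not_collinear_of_mem_commonNeighbors hab hz₁ hz₂) h₁₂,
      Set.ncard_pair hab] at hle
    omega
  refine ⟨c, hGQ.complete3Arc_of_subset_neighborSet hab (Ne.symm hca) (Ne.symm hcb)
    (isArc_triple.mpr ⟨hnab, hGQ.not_collinear_of_mem_commonNeighbors h₁₂ ha hc,
      hGQ.not_collinear_of_mem_commonNeighbors h₁₂ hb hc⟩) ?_⟩
  intro z hz
  rw [hZ] at hz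
  rw [mem_neighborSet]
  rcases hz with rfl | rfl | rfl
  · exact (mem_commonNeighbors.mp hc).1.symm
  · exact (mem_commonNeighbors.mp hc).2.symm
  · exact hGQ.collinear_third_commonNeighbor hab hnab hz₁ hz₂ hz₃ h₁₂ h₁₃ h₂₃ hc

theorem IsGQ.eq_of_complete3Arc (hGQ : S.IsGQ 2) (habc : S.Complete3Arc a b c) (hda : d ≠ a)
    (hdb : d ≠ b) (had : ¬ S.Collinear a d) (hbd : ¬ S.Collinear b d)
    (hsub : S.graph.commonNeighbors a b ⊆ S.graph.neighborSet d) : c = d := by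
  have hab := habc.1
  obtain ⟨nab, nac, -⟩ := isArc_triple.mp habc.2.2.2.1
  by_contra hcd
  have hdc : S.Collinear d c := (habc.collinear (by simp [hda, hdb, Ne.symm hcd]) had hbd).symm
  obtain ⟨z, hz, hzdc⟩ := Set.exists_ne_of_one_lt_ncard
    (by rw [hGQ.ncard_commonNeighbors nab hab]; norm_num) (S.third d c)
  have hdz : S.Collinear d z := hsub hz
  rw [mem_commonNeighbors] at hz
  -- `d * z` extends `{a, b, c}` to a 4-arc
  have hzc : ¬ S.Collinear z c := by
    simpa only [third_third hdc] using
      hGQ.not_collinear_third (collinear_third_left hdc) hdz.symm hzdc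
  have hae : ¬ S.Collinear a (S.third d z) := by
    rw [third_comm hdz]; exact hGQ.not_collinear_third hdz.symm hz.1 (Ne.symm hda)
  have hbe : ¬ S.Collinear b (S.third d z) := by
    rw [third_comm hdz]; exact hGQ.not_collinear_third hdz.symm hz.2 (Ne.symm hdb)
  have hce : ¬ S.Collinear c (S.third d z) :=
    hGQ.not_collinear_third hdz hdc.symm fun h => nac (h ▸ hz.1)
  refine hce (habc.collinear ?_ hae hbe)
  simp only [Set.mem_insert_iff, Set.mem_singleton_iff, not_or]
  exact ⟨fun h => had (h ▸ collinear_third_left hdz).symm,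
    fun h => hbd (h ▸ collinear_third_left hdz).symm,
    fun h => hzc (h ▸ collinear_third_right hdz)⟩

namespace Rep

variable {R : Type*} [Group R] (ρ : S.Rep R)

theorem r_ne_one (x : P) : ρ.r x ≠ 1 := fun h => by
  simpa [h] using ρ.order_two x

theorem r_mul_self (x : P) : ρ.r x * ρ.r x = 1 := by
  rw [← pow_two, ← ρ.order_two x, pow_orderOf_eq_one]

theorem r_inv (x : P) : (ρ.r x)⁻¹ = ρ.r x :=
  inv_eq_self_of_orderOf_eq_two (ρ.order_two x)

theorem r_third (h : S.Collinear x y) : ρ.r (S.third x y) = ρ.r x * ρ.r y :=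
  (ρ.line_rel _ (line_mem h) x (by simp [line]) y (by simp [line]) _ (by simp [line]) h.ne
    (third_ne_left h).symm (third_ne_right h).symm).symm

theorem not_collinear_of_r_eq_mul (hf : Function.Injective ρ.r) (hxy : ¬ S.Collinear x y)
    (hw : ρ.r w = ρ.r x * ρ.r y) : ¬ S.Collinear x w ∧ ¬ S.Collinear y w := by
  constructor
  · intro h
    have hy : S.third x w = y := hf (by rw [ρ.r_third h, hw, ← mul_assoc, r_mul_self, one_mul])
    exact hxy (hy ▸ collinear_third_left h)
  · intro h
    have hx : S.third w y = x := hf (by rw [ρ.r_third h.symm, hw, mul_assoc, r_mul_self, mul_one])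
    exact hxy (hx ▸ collinear_third_right h.symm).symm

theorem card_eq_iff [Finite P] (hf : Function.Injective ρ.r) :
    Nat.card R = Nat.card P + 1 ↔ insert 1 (Set.range ρ.r) = Set.univ := by
  have hcard : (insert 1 (Set.range ρ.r)).ncard = Nat.card P + 1 := by
    rw [Set.ncard_insert_of_notMem (by rintro ⟨x, hx⟩; exact ρ.r_ne_one x hx)
        (Set.finite_range _),
      ← Set.image_univ, Set.ncard_image_of_injective _ hf, Set.ncard_univ]
  refine ⟨fun h => ?_, fun h => by rw [← Set.ncard_univ, ← h, hcard]⟩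
  have : Finite R := Nat.finite_of_card_ne_zero (by omega)
  exact Set.eq_of_subset_of_ncard_le (Set.subset_univ _) (by rw [Set.ncard_univ, h, hcard])

theorem insert_one_range_eq_univ (hmul : ∀ x y, ρ.r x * ρ.r y ∈ insert 1 (Set.range ρ.r)) :
    insert 1 (Set.range ρ.r) = Set.univ := by
  refine Set.eq_univ_of_forall fun g => ?_
  have hg : g ∈ Subgroup.closure (Set.range ρ.r) := ρ.gen ▸ Subgroup.mem_top g
  induction hg using Subgroup.closure_induction with
  | mem g hg => exact Or.inr hg
  | one => exact Or.inl rfl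
  | mul g h _ _ hg hh =>
    rcases hg with rfl | ⟨x, rfl⟩
    · rwa [one_mul]
    rcases hh with rfl | ⟨y, rfl⟩
    · exact Or.inr ⟨x, (mul_one _).symm⟩
    · exact hmul x y
  | inv g _ hg =>
    rcases hg with rfl | ⟨x, rfl⟩
    · exact Or.inl inv_one
    · exact Or.inr ⟨x, (ρ.r_inv x).symm⟩

theorem subset_neighborSet_of_r_eq_mul (hGQ : S.IsGQ t) (hf : Function.Injective ρ.r)
    (hcomm : ∀ x y, Commute (ρ.r x) (ρ.r y)) (hab : ¬ S.Collinear a b)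
    (hd : ρ.r d = ρ.r a * ρ.r b) :
    S.graph.commonNeighbors a b ⊆ S.graph.neighborSet d := by
  obtain ⟨had, hbd⟩ := ρ.not_collinear_of_r_eq_mul hf hab hd
  intro z hz
  rw [mem_commonNeighbors] at hz
  rw [mem_neighborSet]
  by_contra hdz
  -- otherwise `d` is collinear with `z * a` and `z * b`, and `r_d r_{z*a} = r_{z*b}` puts them on a
  -- line, which closes the triangle `z, z * a, z * b`
  have hda := hGQ.collinear_third_of_not_collinear hz.1.symm hdz fun h => had h.symm
  have hdb := hGQ.collinear_third_of_not_collinear hz.2.symm hdz fun h => hbd h.symm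
  have hr : ρ.r d * ρ.r (S.third z a) = ρ.r (S.third z b) := by
    rw [ρ.r_third hz.1.symm, ρ.r_third hz.2.symm, hd]
    calc ρ.r a * ρ.r b * (ρ.r z * ρ.r a) = ρ.r a * (ρ.r b * ρ.r z) * ρ.r a := by
          simp only [mul_assoc]
      _ = ρ.r b * ρ.r z * (ρ.r a * ρ.r a) := by
          rw [((hcomm a b).mul_right (hcomm a z)).eq, mul_assoc]
      _ = ρ.r z * ρ.r b := by rw [ρ.r_mul_self, mul_one, (hcomm b z).eq]
  have hline : S.third d (S.third z a) = S.third z b := hf (by rw [ρ.r_third hda, hr])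
  have htri := hGQ.eq_third_of_collinear (collinear_third_left hz.1.symm)
    (collinear_third_left hz.2.symm) (hline ▸ collinear_third_right hda)
  rw [third_third hz.1.symm] at htri
  exact hab (htri ▸ collinear_third_right hz.2.symm).symm

theorem mul_mul_eq_one_of_complete3Arc (hGQ : S.IsGQ 2) (hf : Function.Injective ρ.r)
    (hR : insert 1 (Set.range ρ.r) = Set.univ) (habc : S.Complete3Arc a b c) :
    ρ.r a * ρ.r b * ρ.r c = 1 := by
  have hmem : ∀ g : R, g = 1 ∨ g ∈ Set.range ρ.r := fun g =>
    Set.mem_insert_iff.mp (hR ▸ Set.mem_univ g)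
  have hcomm : ∀ x y, Commute (ρ.r x) (ρ.r y) := fun x y =>
    Commute.of_orderOf_dvd_two (fun g => by
      rcases hmem g with rfl | ⟨x, rfl⟩
      · simp
      · rw [ρ.order_two x]) _ _
  obtain ⟨d, hd⟩ : ρ.r a * ρ.r b ∈ Set.range ρ.r := (hmem _).resolve_left fun h =>
    habc.1 (hf ((mul_eq_one_iff_eq_inv.mp h).trans (ρ.r_inv b)))
  have hnab : ¬ S.Collinear a b := (isArc_triple.mp habc.2.2.2.1).1
  obtain ⟨had, hbd⟩ := ρ.not_collinear_of_r_eq_mul hf hnab hd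
  have hcd : c = d := hGQ.eq_of_complete3Arc habc
    (fun h => ρ.r_ne_one b (mul_eq_left.mp (h ▸ hd).symm))
    (fun h => ρ.r_ne_one a (mul_eq_right.mp (h ▸ hd).symm)) had hbd
    (ρ.subset_neighborSet_of_r_eq_mul hGQ hf hcomm hnab hd)
  rw [hcd, ← hd, ρ.r_mul_self]

theorem mul_mem_insert_one_range (hGQ : S.IsGQ 2)
    (hrel : ∀ a b c : P, S.Complete3Arc a b c → ρ.r a * ρ.r b * ρ.r c = 1) (x y : P) :
    ρ.r x * ρ.r y ∈ insert 1 (Set.range ρ.r) := by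
  by_cases hxy : x = y
  · exact Or.inl (hxy ▸ ρ.r_mul_self x)
  by_cases hcol : S.Collinear x y
  · exact Or.inr ⟨_, ρ.r_third hcol⟩
  obtain ⟨c, hc⟩ := hGQ.exists_complete3Arc hxy hcol
  exact Or.inr ⟨c, ((eq_inv_of_mul_eq_one_left (hrel x y c hc)).trans (ρ.r_inv c)).symm⟩

end Rep

end SlimPLS

/-- For a faithful representation of the `(2,2)`-GQ, `|R| = 2^4`
iff `r_a r_b r_c = 1` for every complete 3-arc `{a,b,c}` of `S`. -/
theorem gq22_card_iff_triad_rel {P : Type*} (S : SlimPLS P)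
    (hGQ : S.IsGQ 2) {R : Type*} [Group R] (ρ : S.Rep R)
    (hf : Function.Injective ρ.r) :
    Nat.card R = 2 ^ 4 ↔
      ∀ a b c : P, S.Complete3Arc a b c → ρ.r a * ρ.r b * ρ.r c = 1 := by
  have hP : Nat.card P = 15 := hGQ.card_eq
  have : Finite P := Nat.finite_of_card_ne_zero (by omega)
  rw [show 2 ^ 4 = Nat.card P + 1 by omega, ρ.card_eq_iff hf]
  exact ⟨fun hR _ _ _ => ρ.mul_mul_eq_one_of_complete3Arc hGQ hf hR,
    fun hrel => ρ.insert_one_range_eq_univ (ρ.mul_mem_insert_one_range hGQ hrel)⟩
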